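/- Assume p ≤ 1/2 and let r := 4/p². For any f : X → (0,∞), with f_⋆(x) := max_{z∈X} r^{−d(x,z)}·f(z), one has (3·log 6)·E[f_⋆ − f] ≤ Ent(f). -/

import Mathlib

/-! The excess `f⋆ - f` lives on the points `x` with `f x < f⋆ x`. Such an `x` charges its
excess to a point `z` realising the maximum that defines `f⋆ x`; then `f⋆ z = f z`, so `z`
receives charge but sends none. Sparsity `p` bounds the degrees by `1/p` and the ratios
`π x / π y` along edges by `1/p`, so at most `p^{-d}` points at distance `d` charge `z`, each
with mass at most `p^{-d} π z` and excess at most `(p²/4)^d f z`. Writing `Ent f = E[ψ(f)]`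
with `ψ(t) = t log (t / E f) - t + E f`, the bound `3 log 6 · t + ψ(t) ≥ (215/216) E f` lets
every charging point pay for most of its own excess, and what is left for `z`, a sum over
`d ≥ 1` of `(3 log 6 · 4^{-d} f z - (215/216) E f · 4^d)⁺`, is at most `ψ(f z)`. -/

open Finset

noncomputable section

variable {X : Type*} [Fintype X] [DecidableEq X] [Nonempty X]

/-- Dirichlet form `E(f,g) = (1/2) ∑_{x,y} π(x) Q(x,y) (f(x)-f(y))(g(x)-g(y))`. -/
def dirichletForm (π : X → ℝ) (Q : X → X → ℝ) (f g : X → ℝ) : ℝ :=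
  (1 / 2) * ∑ x : X, ∑ y : X, π x * Q x y * (f x - f y) * (g x - g y)

/-- Mean `E[f] = ∑_x π(x) f(x)`. -/
def mean (π : X → ℝ) (f : X → ℝ) : ℝ := ∑ x : X, π x * f x

/-- Entropy `Ent(f) = E[f log f] - E[f] log E[f]`. -/
def entropy (π : X → ℝ) (f : X → ℝ) : ℝ :=
  mean π (fun x => f x * Real.log (f x)) - mean π f * Real.log (mean π f)

/-- Variance `Var(f) = E[f²] - E[f]²`. -/
def variance (π : X → ℝ) (f : X → ℝ) : ℝ :=
  mean π (fun x => f x ^ 2) - (mean π f) ^ 2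

/-- Total jump rate `Q(x) = ∑_{y ≠ x} Q(x,y)`. -/
def jumpRate (Q : X → X → ℝ) (x : X) : ℝ := ∑ y ∈ univ.erase x, Q x y

/-- Sparsity parameter `p = min_{(x,y) ∈ E} Q(x,y) / max(Q(x), Q(y,x))`. -/
def sparsity (Q : X → X → ℝ) : ℝ :=
  sInf {s : ℝ | ∃ x y : X, x ≠ y ∧ 0 < Q x y ∧
    s = Q x y / max (jumpRate Q x) (Q y x)}

/-- The transition graph `(X, E)` (symmetric since under reversibility
`Q(x,y) > 0 ↔ Q(y,x) > 0`). -/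
def chainGraph (Q : X → X → ℝ) : SimpleGraph X where
  Adj x y := x ≠ y ∧ (0 < Q x y ∨ 0 < Q y x)
  symm := by refine ⟨?_⟩; intro x y h; exact ⟨h.1.symm, h.2.symm⟩
  loopless := by refine ⟨?_⟩; intro x h; exact h.1 rfl

/-- Graph distance on `(X, E)`. -/
def graphDist (Q : X → X → ℝ) (x y : X) : ℕ := (chainGraph Q).dist x y

/-- Regularization `f⋆(x) = max_z r^{-d(x,z)} f(z)`. -/
def fStar (Q : X → X → ℝ) (r : ℝ) (f : X → ℝ) (x : X) : ℝ :=
  univ.sup' univ_nonempty (fun z => r ^ (-(graphDist Q x z : ℤ)) * f z)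

/-- `(x,y)` is an allowed transition. -/
def IsEdge (Q : X → X → ℝ) (e : X × X) : Prop := e.1 ≠ e.2 ∧ 0 < Q e.1 e.2

/-- The edge set `E = {(x,y) : x ≠ y, Q(x,y) > 0}` as a finset. -/
def edges (Q : X → X → ℝ) : Finset (X × X) :=
  univ.filter (fun e => e.1 ≠ e.2 ∧ 0 < Q e.1 e.2)

/-- Edge weight `c(x,y) = π(x) Q(x,y)`. -/
def edgeWeight (π : X → ℝ) (Q : X → X → ℝ) (e : X × X) : ℝ := π e.1 * Q e.1 e.2

/-- Distance between edges: `d(e,e') = ℓ - 1` where `ℓ` is the minimal length of a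
path `(x_0, …, x_ℓ)` with `(x_0,x_1) = e` and `(x_{ℓ-1}, x_ℓ) = e'`. -/
def edgeDist (Q : X → X → ℝ) (e e' : X × X) : ℕ :=
  sInf {n : ℕ | ∃ c : ℕ → X, c 0 = e.1 ∧ c 1 = e.2 ∧ c n = e'.1 ∧ c (n + 1) = e'.2 ∧
    ∀ i < n + 1, (chainGraph Q).Adj (c i) (c (i + 1))}

/-- `κ = max_{e' ∈ E} (1/c(e')) ∑_{e ∈ E} c(e) r^{-d(e,e')}`. -/
def kappa (π : X → ℝ) (Q : X → X → ℝ) (r : ℝ) : ℝ :=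
  sSup {k : ℝ | ∃ e' ∈ edges Q, k = (1 / edgeWeight π Q e') *
    ∑ e ∈ edges Q, edgeWeight π Q e * r ^ (-(edgeDist Q e e' : ℤ))}

/-- `H(w) = ((√w + 1)/(√w - 1)) log w` for `w ≠ 1`, and `H(1) = 4`. -/
def Hfun (w : ℝ) : ℝ :=
  if w = 1 then 4 else ((Real.sqrt w + 1) / (Real.sqrt w - 1)) * Real.log w

/-- A function is `r`-regular if `f(x) ≤ r f(y)` across every edge. -/
def IsRRegular (Q : X → X → ℝ) (r : ℝ) (f : X → ℝ) : Prop :=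
  ∀ x y : X, x ≠ y → 0 < Q x y → f x ≤ r * f y

/-- Maximum degree of the graph `(X, E)`. -/
def maxDegree (Q : X → X → ℝ) : ℕ :=
  univ.sup (fun x : X => Nat.card {y : X // (chainGraph Q).Adj x y})

/-- Irreducibility: every state can be reached from every other through allowed
transitions. -/
def MarkovIrreducible (Q : X → X → ℝ) : Prop :=
  ∀ x y : X, Relation.ReflTransGen (fun a b => a ≠ b ∧ 0 < Q a b) x y

def entropyDensity (m t : ℝ) : ℝ := t * Real.log (t / m) - t + m

/-- Fenchel–Young: the convex conjugate of `t ↦ entropyDensity m t` is `s ↦ m (e^s - 1)`. -/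
theorem mul_log_sub_le_entropyDensity {m t a : ℝ} (hm : 0 < m) (ht : 0 < t) (ha : 0 < a) :
    t * Real.log a - (a - 1) * m ≤ entropyDensity m t := by
  have hlog := Real.log_le_sub_one_of_pos (show 0 < a * m / t by positivity)
  rw [Real.log_div (by positivity) ht.ne', Real.log_mul ha.ne' hm.ne'] at hlog
  have key : t * (Real.log a + Real.log m - Real.log t) ≤ a * m - t :=
    calc _ ≤ t * (a * m / t - 1) := mul_le_mul_of_nonneg_left hlog ht.le
      _ = a * m - t := by field_simp
  rw [entropyDensity, Real.log_div ht.ne' hm.ne']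
  nlinarith

theorem entropyDensity_nonneg {m t : ℝ} (hm : 0 < m) (ht : 0 < t) : 0 ≤ entropyDensity m t := by
  simpa using mul_log_sub_le_entropyDensity hm ht one_pos

/-- Fenchel–Young with `a = 6⁻³`: this is where `215 / 216 = 1 - 6⁻³` comes from. -/
theorem sub_three_log_six_mul_le_entropyDensity {m t : ℝ} (hm : 0 < m) (ht : 0 < t) :
    215 / 216 * m - 3 * Real.log 6 * t ≤ entropyDensity m t := by
  have h := mul_log_sub_le_entropyDensity hm ht (show (0 : ℝ) < 6⁻¹ ^ 3 by positivity)
  rw [Real.log_pow, Real.log_inv] at h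
  norm_num at h
  linarith

/-- `hlarge` forces `t ≥ (6e - 1) m` (as `3 log 6 ≤ 15`); then use Fenchel–Young with `a = 6e`. -/
theorem log_six_mul_le_entropyDensity {m t : ℝ} (hm : 0 < m) (ht : 0 < t)
    (hlarge : 256 * (215 / 216 * m) < 3 * Real.log 6 * t) :
    Real.log 6 * t ≤ entropyDensity m t := by
  have hlog6 : Real.log 6 ≤ 5 := by
    linarith [Real.log_le_sub_one_of_pos (show (0 : ℝ) < 6 by norm_num)]
  have he := Real.exp_one_lt_d9
  have hYoung := mul_log_sub_le_entropyDensity hm ht (show 0 < 6 * Real.exp 1 by positivity)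
  rw [Real.log_mul (by norm_num) (Real.exp_pos 1).ne', Real.log_exp] at hYoung
  nlinarith

theorem sum_Ico_max_sub_le_entropyDensity {m t : ℝ} (hm : 0 < m) (ht : 0 < t) (N : ℕ) :
    ∑ d ∈ Ico 1 N, max 0 (3 * Real.log 6 * t * 4⁻¹ ^ d - 215 / 216 * m * 4 ^ d) ≤
      entropyDensity m t := by
  set K := 3 * Real.log 6
  have hψ := entropyDensity_nonneg hm ht
  rcases le_or_gt (K * t) (256 * (215 / 216 * m)) with hsmall | hlarge
  · -- only the term `d = 1` can be positive
    have htail : ∀ d ∈ Ico 2 N, max 0 (K * t * 4⁻¹ ^ d - 215 / 216 * m * 4 ^ d) = 0 := by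
      intro d hd
      have h16 : (256 : ℝ) ≤ 4 ^ d * 4 ^ d := by
        rw [← mul_pow]
        exact le_trans (by norm_num) (pow_le_pow_right₀ (by norm_num) (mem_Ico.mp hd).1)
      have h4 : (0 : ℝ) < 4 ^ d := by positivity
      refine max_eq_left (sub_nonpos.mpr ?_)
      rw [inv_pow, ← div_eq_mul_inv, div_le_iff₀ h4]
      nlinarith
    rcases le_or_gt N 1 with hN | hN
    · simpa [Ico_eq_empty_of_le hN] using hψ
    rw [sum_eq_sum_Ico_succ_bot hN, sum_eq_zero htail, add_zero]
    have hlog : 3 * Real.log 6 ≤ 4 * Real.log 4 := by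
      have h := Real.log_le_log (show (0 : ℝ) < 6 ^ 3 by norm_num)
        (show (6 : ℝ) ^ 3 ≤ 4 ^ 4 by norm_num)
      simpa only [Real.log_pow, Nat.cast_ofNat] using h
    have hYoung := mul_log_sub_le_entropyDensity hm ht (show (0 : ℝ) < 4 by norm_num)
    exact max_le hψ (by nlinarith)
  · have hgeom : ∑ d ∈ Ico 1 N, (4 : ℝ)⁻¹ ^ d ≤ 1 / 3 :=
      (geom_sum_Ico_le_of_lt_one (by norm_num) (by norm_num)).trans_eq (by norm_num)
    calc _ ≤ ∑ d ∈ Ico 1 N, K * t * 4⁻¹ ^ d :=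
          sum_le_sum fun d _ =>
            max_le (by positivity) (by nlinarith [mul_pos hm (pow_pos four_pos d)])
      _ ≤ K * t * (1 / 3) := by rw [← mul_sum]; gcongr
      _ = Real.log 6 * t := by ring
      _ ≤ entropyDensity m t := log_six_mul_le_entropyDensity hm ht hlarge

theorem Finset.sum_le_sum_of_sum_fiber_sub_le {ι M : Type*} [Fintype ι] [DecidableEq ι]
    [AddCommGroup M] [PartialOrder M] [IsOrderedAddMonoid M] {a b : ι → M} {S : Finset ι}
    {φ : ι → ι} (hφ : ∀ x ∈ S, φ x ∉ S) (ha : ∀ x ∉ S, a x = 0)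
    (hfiber : ∀ z ∉ S, ∑ x ∈ S with φ x = z, (a x - b x) ≤ b z) :
    ∑ x, a x ≤ ∑ x, b x := by
  have hmaps : ∀ x ∈ S, φ x ∈ univ \ S := fun x hx => mem_sdiff.mpr ⟨mem_univ _, hφ x hx⟩
  calc ∑ x, a x = ∑ x ∈ S, (a x - b x) + ∑ x ∈ S, b x := by
        rw [← sum_subset (subset_univ S) fun x _ hx => ha x hx, ← sum_add_distrib]
        simp
    _ = ∑ z ∈ univ \ S, ∑ x ∈ S with φ x = z, (a x - b x) + ∑ x ∈ S, b x := by
        rw [sum_fiberwise_of_maps_to hmaps]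
    _ ≤ ∑ z ∈ univ \ S, b z + ∑ x ∈ S, b x := by
        gcongr with z hz
        exact hfiber z (mem_sdiff.mp hz).2
    _ = ∑ x, b x := sum_sdiff (subset_univ S)

theorem entropy_eq_mean_entropyDensity {V : Type*} [Fintype V] {π f : V → ℝ}
    (hπ : ∑ x, π x = 1) (hm : mean π f ≠ 0) :
    entropy π f = mean π (fun x => entropyDensity (mean π f) (f x)) := by
  set m := mean π f with hm_def
  have hψ : ∀ x, π x * entropyDensity m (f x) =
      π x * (f x * Real.log (f x)) - π x * f x * Real.log m - π x * f x + π x * m := fun x => by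
    rcases eq_or_ne (f x) 0 with h0 | h0
    · simp [entropyDensity, h0]
    · rw [entropyDensity, Real.log_div h0 hm]; ring
  have hsum : ∑ x, π x * f x = m := rfl
  rw [entropy, ← hm_def, mean, mean]
  simp only [hψ, sum_add_distrib, sum_sub_distrib, ← sum_mul, hπ, hsum]
  ring

namespace SimpleGraph

variable {V : Type*} {G : SimpleGraph V}

theorem Walk.le_pow_length_mul {w : V → ℝ} {c : ℝ} (hc : 0 ≤ c)
    (hw : ∀ x y, G.Adj x y → w x ≤ c * w y) {x z : V} (p : G.Walk x z) :
    w x ≤ c ^ p.length * w z := by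
  induction p with
  | nil => simp
  | cons hadj p ih =>
    rw [length_cons, pow_succ', mul_assoc]
    exact (hw _ _ hadj).trans (mul_le_mul_of_nonneg_left ih hc)

theorem Connected.le_pow_dist_mul (hG : G.Connected) {w : V → ℝ} {c : ℝ} (hc : 0 ≤ c)
    (hw : ∀ x y, G.Adj x y → w x ≤ c * w y) (x z : V) :
    w x ≤ c ^ G.dist x z * w z := by
  obtain ⟨p, hp⟩ := hG.exists_walk_length_eq_dist x z
  exact hp ▸ p.le_pow_length_mul hc hw

variable [Fintype V] [DecidableRel G.Adj]

theorem Connected.card_filter_dist_eq_le (hG : G.Connected) {D : ℝ}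
    (hD : ∀ v, (G.degree v : ℝ) ≤ D) (z : V) (d : ℕ) :
    (#{v | G.dist v z = d} : ℝ) ≤ D ^ d := by
  classical
  induction d with
  | zero =>
    have hsub : ({v | G.dist v z = 0} : Finset V) ⊆ {z} := fun v hv => by
      simpa [hG.dist_eq_zero_iff] using hv
    simpa using (card_le_card hsub)
  | succ d ih =>
    have hD0 : 0 ≤ D := (Nat.cast_nonneg _).trans (hD z)
    -- the first step of a geodesic from `v` to `z` lands on the sphere of radius `d`
    have hsub : ({v | G.dist v z = d + 1} : Finset V) ⊆
        ({u | G.dist u z = d} : Finset V).biUnion fun u => G.neighborFinset u := by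
      intro v hv
      obtain ⟨p, hp⟩ := hG.exists_walk_length_eq_dist v z
      rw [(mem_filter.mp hv).2] at hp
      cases p with
      | nil => simp at hp
      | @cons _ b _ hadj p =>
        have hle : G.dist b z ≤ d := by
          simpa [show p.length = d by simpa using hp] using dist_le p
        have htri : G.dist v z ≤ G.dist v b + G.dist b z := hG.dist_triangle
        rw [(mem_filter.mp hv).2, dist_eq_one_iff_adj.mpr hadj] at htri
        exact mem_biUnion.mpr ⟨b, mem_filter.mpr ⟨mem_univ _, by omega⟩,
          (mem_neighborFinset _ _ _).mpr hadj.symm⟩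
    calc (#{v | G.dist v z = d + 1} : ℝ)
        ≤ ∑ u ∈ ({u | G.dist u z = d} : Finset V), (#(G.neighborFinset u) : ℝ) := by
          exact_mod_cast (card_le_card hsub).trans card_biUnion_le
      _ ≤ ∑ u ∈ ({u | G.dist u z = d} : Finset V), D :=
          sum_le_sum fun u _ => by simpa using hD u
      _ ≤ D ^ d * D := by
          rw [sum_const, nsmul_eq_mul]
          exact mul_le_mul_of_nonneg_right ih hD0
      _ = D ^ (d + 1) := (pow_succ D d).symm

theorem Connected.sum_le_sum_pow_mul (hG : G.Connected) {D : ℝ}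
    (hD : ∀ v, (G.degree v : ℝ) ≤ D) {z : V} {A : Finset V} (hzA : z ∉ A)
    {e : V → ℝ} {h : ℕ → ℝ} (hh : ∀ d, 0 ≤ h d) (he : ∀ x ∈ A, e x ≤ h (G.dist x z)) :
    ∑ x ∈ A, e x ≤ ∑ d ∈ Ico 1 (Fintype.card V), D ^ d * h d := by
  have hdist : ∀ x ∈ A, G.dist x z ∈ Ico 1 (Fintype.card V) := fun x hx => by
    obtain ⟨p, hpath, hp⟩ := hG.exists_path_of_dist x z
    exact mem_Ico.mpr ⟨hG.pos_dist_of_ne (ne_of_mem_of_not_mem hx hzA),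
      hp ▸ hpath.length_lt⟩
  calc ∑ x ∈ A, e x ≤ ∑ x ∈ A, h (G.dist x z) := sum_le_sum he
    _ = ∑ d ∈ Ico 1 (Fintype.card V), ∑ x ∈ A with G.dist x z = d, h d := by
      rw [← sum_fiberwise_of_maps_to hdist]
      exact sum_congr rfl fun d _ => sum_congr rfl fun x hx => by rw [(mem_filter.mp hx).2]
    _ ≤ ∑ d ∈ Ico 1 (Fintype.card V), D ^ d * h d := by
      refine sum_le_sum fun d _ => ?_
      rw [sum_const, nsmul_eq_mul]
      refine mul_le_mul_of_nonneg_right ?_ (hh d)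
      refine le_trans ?_ (hG.card_filter_dist_eq_le hD z d)
      exact_mod_cast card_le_card (filter_subset_filter _ (subset_univ A))

end SimpleGraph

section Regularization

variable {V : Type*} [Fintype V] [Nonempty V] (Q : V → V → ℝ) (r : ℝ) (f : V → ℝ)

theorem le_fStar (x : V) : f x ≤ fStar Q r f x :=
  le_sup'_of_le _ (mem_univ x) (by simp [graphDist])

theorem exists_fStar_eq (x : V) : ∃ z, fStar Q r f x = r ^ (-(graphDist Q x z : ℤ)) * f z := by
  obtain ⟨z, -, hz⟩ :=
    exists_mem_eq_sup' univ_nonempty fun z => r ^ (-(graphDist Q x z : ℤ)) * f z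
  exact ⟨z, hz⟩

/-- Anything that beat `f z` from `z` would, discounted along `x → z → w`, beat `f⋆ x` from `x`. -/
theorem fStar_eq_of_fStar_eq (hG : (chainGraph Q).Connected) (hr : 1 ≤ r) (hf : ∀ x, 0 ≤ f x)
    {x z : V} (hz : fStar Q r f x = r ^ (-(graphDist Q x z : ℤ)) * f z) :
    fStar Q r f z = f z := by
  refine le_antisymm (sup'_le _ _ fun w _ => ?_) (le_fStar Q r f z)
  have htri : graphDist Q x w ≤ graphDist Q x z + graphDist Q z w := hG.dist_triangle
  have hxz : 0 < r ^ (-(graphDist Q x z : ℤ)) := zpow_pos (by linarith) _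
  refine le_of_mul_le_mul_left ?_ hxz
  calc r ^ (-(graphDist Q x z : ℤ)) * (r ^ (-(graphDist Q z w : ℤ)) * f w)
      = r ^ (-((graphDist Q x z + graphDist Q z w : ℕ) : ℤ)) * f w := by
        rw [← mul_assoc, ← zpow_add₀ (by positivity)]
        push_cast
        ring_nf
    _ ≤ r ^ (-(graphDist Q x w : ℤ)) * f w :=
        mul_le_mul_of_nonneg_right (zpow_le_zpow_right₀ hr (by omega)) (hf w)
    _ ≤ fStar Q r f x := le_sup' (fun z => r ^ (-(graphDist Q x z : ℤ)) * f z) (mem_univ w)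
    _ = r ^ (-(graphDist Q x z : ℤ)) * f z := hz

end Regularization

section MarkovChain

variable {V : Type*} {Q : V → V → ℝ}

theorem MarkovIrreducible.exists_pos [Nontrivial V] (hirr : MarkovIrreducible Q) :
    ∃ x y, x ≠ y ∧ 0 < Q x y := by
  obtain ⟨x, y, hxy⟩ := exists_pair_ne V
  rcases (hirr x y).cases_head with rfl | ⟨w, hxw, -⟩
  · exact absurd rfl hxy
  · exact ⟨x, w, hxw⟩

theorem MarkovIrreducible.chainGraph_connected [Nonempty V] (hirr : MarkovIrreducible Q) :
    (chainGraph Q).Connected := by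
  refine (SimpleGraph.connected_iff _).mpr ⟨fun x y => ?_, inferInstance⟩
  rw [SimpleGraph.reachable_iff_reflTransGen]
  exact Relation.ReflTransGen.mono (fun a b hab => ⟨hab.1, Or.inl hab.2⟩) _ _ (hirr x y)

theorem chainGraph_adj_iff {π : V → ℝ} (hπ : ∀ x, 0 < π x)
    (hrev : ∀ x y, π x * Q x y = π y * Q y x) {x y : V} :
    (chainGraph Q).Adj x y ↔ x ≠ y ∧ 0 < Q x y := by
  refine ⟨fun ⟨hxy, h⟩ => ⟨hxy, h.elim id fun h => ?_⟩, fun ⟨hxy, h⟩ => ⟨hxy, Or.inl h⟩⟩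
  have := hrev x y
  exact pos_of_mul_pos_right (this ▸ mul_pos (hπ y) h) (hπ x).le

variable [Fintype V] [DecidableEq V]

theorem le_jumpRate (hQ : ∀ x y, x ≠ y → 0 ≤ Q x y) {x y : V} (hxy : x ≠ y) :
    Q x y ≤ jumpRate Q x :=
  single_le_sum (f := Q x) (fun w hw => hQ x w (ne_of_mem_erase hw).symm)
    (mem_erase.mpr ⟨hxy.symm, mem_univ y⟩)

theorem sparsity_nonneg (hQ : ∀ x y, x ≠ y → 0 ≤ Q x y) : 0 ≤ sparsity Q := by
  refine Real.sInf_nonneg ?_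
  rintro _ ⟨x, y, hxy, hpos, rfl⟩
  exact div_nonneg hpos.le ((le_jumpRate hQ hxy).trans' hpos.le |>.trans (le_max_left _ _))

theorem sparsity_mul_le (hQ : ∀ x y, x ≠ y → 0 ≤ Q x y) {x y : V} (hxy : x ≠ y)
    (hpos : 0 < Q x y) : sparsity Q * max (jumpRate Q x) (Q y x) ≤ Q x y := by
  have hmax : 0 < max (jumpRate Q x) (Q y x) :=
    lt_max_of_lt_left (hpos.trans_le (le_jumpRate hQ hxy))
  rw [← le_div_iff₀ hmax]
  refine csInf_le ⟨0, ?_⟩ ⟨x, y, hxy, hpos, rfl⟩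
  rintro _ ⟨x, y, hxy, hpos, rfl⟩
  exact div_nonneg hpos.le ((le_jumpRate hQ hxy).trans' hpos.le |>.trans (le_max_left _ _))

theorem sparsity_pos [Nontrivial V] (hQ : ∀ x y, x ≠ y → 0 ≤ Q x y)
    (hirr : MarkovIrreducible Q) : 0 < sparsity Q := by
  obtain ⟨x, y, hxy, hpos⟩ := hirr.exists_pos
  set s := {s : ℝ | ∃ x y : V, x ≠ y ∧ 0 < Q x y ∧ s = Q x y / max (jumpRate Q x) (Q y x)}
  have hfin : s.Finite :=
    (Set.finite_range fun e : V × V => Q e.1 e.2 / max (jumpRate Q e.1) (Q e.2 e.1)).subset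
      (by rintro _ ⟨x, y, -, -, rfl⟩; exact ⟨(x, y), rfl⟩)
  obtain ⟨x, y, hxy, hpos, hs⟩ :=
    (show s.Nonempty from ⟨_, x, y, hxy, hpos, rfl⟩).csInf_mem hfin
  rw [sparsity, hs]
  exact div_pos hpos (lt_max_of_lt_left (hpos.trans_le (le_jumpRate hQ hxy)))

/-- Every edge out of `x` carries at least a `sparsity Q` fraction of the jump rate `Q(x)`. -/
theorem degree_chainGraph_mul_sparsity_le [DecidableRel (chainGraph Q).Adj]
    (hQ : ∀ x y, x ≠ y → 0 ≤ Q x y) {π : V → ℝ} (hπ : ∀ x, 0 < π x)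
    (hrev : ∀ x y, π x * Q x y = π y * Q y x) (x : V) :
    ((chainGraph Q).degree x : ℝ) * sparsity Q ≤ 1 := by
  rw [← SimpleGraph.card_neighborFinset_eq_degree]
  set N := (chainGraph Q).neighborFinset x
  rcases N.eq_empty_or_nonempty with hN | ⟨y₀, hy₀⟩
  · simp [hN]
  have hadj : ∀ y ∈ N, x ≠ y ∧ 0 < Q x y := fun y hy =>
    (chainGraph_adj_iff hπ hrev).mp ((SimpleGraph.mem_neighborFinset _ _ _).mp hy)
  have hJ : 0 < jumpRate Q x := (hadj y₀ hy₀).2.trans_le (le_jumpRate hQ (hadj y₀ hy₀).1)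
  refine le_of_mul_le_mul_right ?_ hJ
  calc (#N : ℝ) * sparsity Q * jumpRate Q x = ∑ y ∈ N, sparsity Q * jumpRate Q x := by
        rw [sum_const, nsmul_eq_mul, mul_assoc]
    _ ≤ ∑ y ∈ N, Q x y := sum_le_sum fun y hy =>
        (mul_le_mul_of_nonneg_left (le_max_left _ _) (sparsity_nonneg hQ)).trans
          (sparsity_mul_le hQ (hadj y hy).1 (hadj y hy).2)
    _ ≤ jumpRate Q x :=
        sum_le_sum_of_subset_of_nonneg (fun y hy => mem_erase.mpr ⟨(hadj y hy).1.symm, mem_univ y⟩)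
          fun w hw _ => hQ x w (ne_of_mem_erase hw).symm
    _ = 1 * jumpRate Q x := (one_mul _).symm

theorem le_inv_sparsity_mul (hQ : ∀ x y, x ≠ y → 0 ≤ Q x y) {π : V → ℝ} (hπ : ∀ x, 0 < π x)
    (hrev : ∀ x y, π x * Q x y = π y * Q y x) (hp : 0 < sparsity Q) {x y : V}
    (hadj : (chainGraph Q).Adj x y) :
    π x ≤ (sparsity Q)⁻¹ * π y := by
  obtain ⟨hxy, hpos⟩ := (chainGraph_adj_iff hπ hrev).mp hadj
  have hQyx : sparsity Q * Q y x ≤ Q x y :=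
    (mul_le_mul_of_nonneg_left (le_max_right _ _) hp.le).trans (sparsity_mul_le hQ hxy hpos)
  rw [le_inv_mul_iff₀ hp]
  refine le_of_mul_le_mul_right ?_ hpos
  calc sparsity Q * π x * Q x y = sparsity Q * (π x * Q x y) := mul_assoc _ _ _
    _ = π y * (sparsity Q * Q y x) := by rw [hrev]; ring
    _ ≤ π y * Q x y := mul_le_mul_of_nonneg_left hQyx (hπ y).le

end MarkovChain

theorem three_log_six_mul_sub_sub_entropyDensity_le {m s t w πx πz : ℝ} (hm : 0 < m)
    (ht : 0 < t) (hπx : 0 ≤ πx) (hπ : πx ≤ w * πz) :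
    3 * Real.log 6 * (πx * (s - t)) - πx * entropyDensity m t ≤
      w * (πz * max 0 (3 * Real.log 6 * s - 215 / 216 * m)) := by
  have hψ := sub_three_log_six_mul_le_entropyDensity hm ht
  calc 3 * Real.log 6 * (πx * (s - t)) - πx * entropyDensity m t
      ≤ πx * max 0 (3 * Real.log 6 * s - 215 / 216 * m) := by
        nlinarith [le_max_right 0 (3 * Real.log 6 * s - 215 / 216 * m)]
    _ ≤ w * πz * max 0 (3 * Real.log 6 * s - 215 / 216 * m) :=
        mul_le_mul_of_nonneg_right hπ (le_max_left _ _)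
    _ = w * (πz * max 0 (3 * Real.log 6 * s - 215 / 216 * m)) := mul_assoc _ _ _

theorem pow_mul_pow_mul_max_sub_le {q a b : ℝ} (hq : 2 ≤ q) (hb : 0 ≤ b) (d : ℕ) :
    q ^ d * (q ^ d * max 0 (a * (4 * q ^ 2)⁻¹ ^ d - b)) ≤ max 0 (a * 4⁻¹ ^ d - b * 4 ^ d) := by
  have hq0 : 0 ≤ q ^ d := by positivity
  rw [mul_max_of_nonneg _ _ hq0, mul_max_of_nonneg _ _ hq0, mul_zero, mul_zero]
  refine max_le_max le_rfl ?_
  have h4 : (4 : ℝ) ^ d ≤ q ^ d * q ^ d := by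
    rw [← mul_pow]
    exact pow_le_pow_left₀ (by norm_num) (by nlinarith) d
  have hcancel : q ^ d * (q ^ d * (a * (4 * q ^ 2)⁻¹ ^ d)) = a * 4⁻¹ ^ d := by
    rw [inv_pow, inv_pow]
    field_simp
    ring
  rw [mul_sub, mul_sub, hcancel]
  nlinarith

theorem three_log_six_mul_mean_fStar_sub_le {V : Type*} [Fintype V] [DecidableEq V] [Nonempty V]
    {Q : V → V → ℝ} [DecidableRel (chainGraph Q).Adj] (hG : (chainGraph Q).Connected) {q : ℝ}
    (hq : 2 ≤ q) (hdeg : ∀ v, ((chainGraph Q).degree v : ℝ) ≤ q) {π : V → ℝ}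
    (hπ : ∀ x, 0 < π x) (hπadj : ∀ x y, (chainGraph Q).Adj x y → π x ≤ q * π y)
    {f : V → ℝ} (hf : ∀ x, 0 < f x) {m : ℝ} (hm : 0 < m) :
    3 * Real.log 6 * mean π (fun x => fStar Q (4 * q ^ 2) f x - f x) ≤
      mean π (fun x => entropyDensity m (f x)) := by
  set K := 3 * Real.log 6
  set r := 4 * q ^ 2
  have hr : 1 ≤ r := by nlinarith
  choose φ hφ using fun x => exists_fStar_eq Q r f x
  have hfix : ∀ x, fStar Q r f (φ x) = f (φ x) := fun x =>
    fStar_eq_of_fStar_eq Q r f hG hr (fun x => (hf x).le) (hφ x)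
  rw [mean, mean, mul_sum]
  set S : Finset V := {x | f x < fStar Q r f x}
  refine sum_le_sum_of_sum_fiber_sub_le (S := S) (φ := φ)
    (fun x _ => by simp [S, hfix x]) (fun x hx => ?_) (fun z hz => ?_)
  · rw [le_antisymm (by simpa [S] using hx) (le_fStar Q r f x)]
    ring
  set h : ℕ → ℝ := fun d => q ^ d * (π z * max 0 (K * (r⁻¹ ^ d * f z) - 215 / 216 * m))
  have hcharge : ∀ x ∈ {x ∈ S | φ x = z},
      K * (π x * (fStar Q r f x - f x)) - π x * entropyDensity m (f x) ≤
        h (graphDist Q x z) := by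
    intro x hx
    have hφx : fStar Q r f x = r⁻¹ ^ graphDist Q x z * f z := by
      rw [hφ x, (mem_filter.mp hx).2, zpow_neg, zpow_natCast, inv_pow]
    simp only [h]
    rw [← hφx]
    exact three_log_six_mul_sub_sub_entropyDensity_le hm (hf x) (hπ x).le
      (hG.le_pow_dist_mul (by linarith) hπadj x z)
  calc _ ≤ ∑ d ∈ Ico 1 (Fintype.card V), q ^ d * h d :=
        hG.sum_le_sum_pow_mul hdeg (fun hz' => hz (filter_subset _ _ hz')) (fun d =>
          mul_nonneg (by positivity) (mul_nonneg (hπ z).le (le_max_left _ _)))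
          hcharge
    _ ≤ ∑ d ∈ Ico 1 (Fintype.card V), π z * max 0 (K * f z * 4⁻¹ ^ d - 215 / 216 * m * 4 ^ d) :=
        sum_le_sum fun d _ => by
          rw [show q ^ d * h d = π z * (q ^ d * (q ^ d * max 0
            (K * f z * r⁻¹ ^ d - 215 / 216 * m))) by simp only [h]; ring_nf]
          exact mul_le_mul_of_nonneg_left (pow_mul_pow_mul_max_sub_le hq (by positivity) d)
            (hπ z).le
    _ = π z * ∑ d ∈ Ico 1 (Fintype.card V), max 0 (K * f z * 4⁻¹ ^ d - 215 / 216 * m * 4 ^ d) :=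
        (mul_sum _ _ _).symm
    _ ≤ π z * entropyDensity m (f z) :=
        mul_le_mul_of_nonneg_left (sum_Ico_max_sub_le_entropyDensity hm (hf z) _) (hπ z).le

theorem mean_fStar_sub_le_entropy_general
    (π : X → ℝ) (Q : X → X → ℝ)
    (hQ : ∀ x y : X, x ≠ y → 0 ≤ Q x y)
    (hirr : MarkovIrreducible Q)
    (hπpos : ∀ x : X, 0 < π x)
    (hπsum : ∑ x : X, π x = 1)
    (hrev : ∀ x y : X, π x * Q x y = π y * Q y x)
    (hp : sparsity Q ≤ 1 / 2) (f : X → ℝ) (hf : ∀ x, 0 < f x) :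
     (3 * Real.log 6) * mean π (fun x => fStar Q (4 / sparsity Q ^ 2) f x - f x) ≤
      entropy π f := by
  classical
  have hm : 0 < mean π f := sum_pos (fun x _ => mul_pos (hπpos x) (hf x)) univ_nonempty
  have hψ : 0 ≤ mean π (fun x => entropyDensity (mean π f) (f x)) :=
    sum_nonneg fun x _ => mul_nonneg (hπpos x).le (entropyDensity_nonneg hm (hf x))
  rw [entropy_eq_mean_entropyDensity hπsum hm.ne']
  rcases subsingleton_or_nontrivial X with hX | hX
  · have hfix : ∀ x, fStar Q (4 / sparsity Q ^ 2) f x = f x := fun x => by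
      obtain ⟨z, hz⟩ := exists_fStar_eq Q (4 / sparsity Q ^ 2) f x
      simp [hz, Subsingleton.elim z x, graphDist]
    simpa [hfix, mean] using hψ
  have hp0 := sparsity_pos hQ hirr
  have hq : 2 ≤ (sparsity Q)⁻¹ := by rw [le_inv_comm₀ two_pos hp0]; linarith
  have hdeg (v : X) : ((chainGraph Q).degree v : ℝ) ≤ (sparsity Q)⁻¹ := by
    rw [inv_eq_one_div, le_div_iff₀ hp0]
    exact degree_chainGraph_mul_sparsity_le hQ hπpos hrev v
  rw [div_eq_mul_inv, ← inv_pow]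
  exact three_log_six_mul_mean_fStar_sub_le hirr.chainGraph_connected hq hdeg hπpos
    (fun x y => le_inv_sparsity_mul hQ hπpos hrev hp0) hf hm

theorem mean_fStar_sub_le_entropy
    (π : X → ℝ) (Q : X → X → ℝ)
    (hQ : ∀ x y : X, x ≠ y → 0 ≤ Q x y)
    (hQsum : ∀ x : X, ∑ y : X, Q x y = 0)
    (hirr : MarkovIrreducible Q)
    (hπpos : ∀ x : X, 0 < π x)
    (hπsum : ∑ x : X, π x = 1)
    (hrev : ∀ x y : X, π x * Q x y = π y * Q y x)
    (hp : sparsity Q ≤ 1 / 2) (f : X → ℝ) (hf : ∀ x, 0 < f x) :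
     (3 * Real.log 6) * mean π (fun x => fStar Q (4 / sparsity Q ^ 2) f x - f x) ≤
      entropy π f :=
  mean_fStar_sub_le_entropy_general π Q hQ hirr hπpos hπsum hrev hp f hf

end
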